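/- arXiv:2411.07094 — 8 statements merged into one kernel-verified Lean document; each statement's English description precedes it below -/
import Mathlib

section
/- Let n ≥ 1 be an integer, μ ∈ ℝ, L > 0, and let x = (x_1,…,x_n) and x' = (x'_1,…,x'_n) be vectors in [μ−L, μ+L]^n that differ in exactly one coordinate. Let 0 < ε ≤ 1 and 0 < δ ≤ 1, and set σ_DP² = 8L²·ln(1.25/δ)/ε². Then for every Borel set S ⊆ ℝ, the Gaussian measure N(0, σ_DP²) satisfies P_{Z∼N(0,σ_DP²)}( (x_1+⋯+x_n)/n + Z/n ∈ S ) ≤ e^ε · P_{Z∼N(0,σ_DP²)}( (x'_1+⋯+x'_n)/n + Z/n ∈ S ) + δ. -/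
/-!
Where the privacy loss `((x - μ') ^ 2 - (x - μ) ^ 2) / (2 v)` of `N(μ, v)` against `N(μ', v)` is
at most `ε`, the densities satisfy `p_μ ≤ e^ε p_μ'`; hence
`N(μ, v) A ≤ e^ε N(μ', v) A + N(μ, v) (loss > ε)`. Centred, and reflected so that `μ ≥ μ'`, the
loss exceeds `ε` only beyond `t = v ε / Δ - Δ / 2`, where `Δ ≥ |μ - μ'|`. Comparing the density
with its translate by `t` bounds this tail by `e^{-t² / (2v)} / 2`, and for
`v = 2 Δ² log (1.25 / δ) / ε²` that is at most `1.25 e^{-log (1.25 / δ)} = δ`: the constant `1.25`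
absorbs `e^{1/2} / 2`. The threshold `t` is negative only when `δ > 0.9`, and then the mass `1/2`
of the positive half-line plus density times length of `(t, 0]` is already below `δ`.
For the sample mean, `Δ = 2L` bounds the change of the sum, and dividing by `n` only relabels the
output, so it suffices to treat the sum.
-/

open MeasureTheory ProbabilityTheory Real Set
open scoped NNReal ENNReal

namespace MeasureTheory

theorem withDensity_apply_le_mul_add {α : Type*} [MeasurableSpace α] {ρ : Measure α}
    {f g : α → ℝ≥0∞} (hf : Measurable f) (hg : Measurable g) (c : ℝ≥0∞)
    {A : Set α} (hA : MeasurableSet A) :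
    ρ.withDensity f A ≤ c * ρ.withDensity g A + ρ.withDensity f {x | c * g x < f x} := by
  set B := {x | c * g x < f x}
  have hB : MeasurableSet B := measurableSet_lt (hg.const_mul c) hf
  rw [withDensity_apply _ hA, withDensity_apply _ hA, withDensity_apply _ hB,
    ← lintegral_inter_add_sdiff _ A hB, add_comm]
  gcongr ?_ + ?_
  · calc ∫⁻ x in A \ B, f x ∂ρ ≤ ∫⁻ x in A \ B, c * g x ∂ρ :=
          setLIntegral_mono' (hA.diff hB) fun x hx ↦ not_lt.1 hx.2
      _ = c * ∫⁻ x in A \ B, g x ∂ρ := lintegral_const_mul c hg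
      _ ≤ c * ∫⁻ x in A, g x ∂ρ := by gcongr; exact sdiff_subset
  · exact lintegral_mono_set inter_subset_right

end MeasureTheory

namespace ProbabilityTheory

variable {μ : ℝ} {v : ℝ≥0}

lemma gaussianReal_preimage_const_add (m : ℝ) (s : Set ℝ) :
    gaussianReal μ v ((m + ·) ⁻¹' s) = gaussianReal (μ + m) v s := by
  rw [← gaussianReal_map_const_add, ← MeasurableEquiv.coe_addLeft m,
    MeasurableEquiv.map_apply]

lemma gaussianReal_apply_neg (s : Set ℝ) : gaussianReal μ v (-s) = gaussianReal (-μ) v s := by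
  rw [← gaussianReal_map_neg]
  exact ((MeasurableEquiv.neg ℝ).map_apply s).symm

lemma gaussianPDFReal_eq_exp_mul (μ' : ℝ) (x : ℝ) :
    gaussianPDFReal μ v x
      = rexp (((x - μ') ^ 2 - (x - μ) ^ 2) / (2 * v)) * gaussianPDFReal μ' v x := by
  simp only [gaussianPDFReal, mul_left_comm _ (√(2 * π * v))⁻¹, ← exp_add]
  ring_nf

lemma gaussianReal_Ioi_zero_le_half : gaussianReal 0 v (Ioi 0) ≤ 2⁻¹ := by
  have hdisj : Disjoint (Iio (0 : ℝ)) (Ioi 0) :=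
    (Iic_disjoint_Ioi le_rfl).mono_left Iio_subset_Iic_self
  have hsymm : gaussianReal 0 v (Iio 0) = gaussianReal 0 v (Ioi 0) := by
    simpa using gaussianReal_apply_neg (μ := 0) (v := v) (Ioi 0)
  rw [ENNReal.le_inv_iff_mul_le, mul_two]
  nth_rewrite 1 [← hsymm]
  rw [← measure_union hdisj measurableSet_Ioi]
  exact prob_le_one

lemma gaussianReal_Ioi_le_exp (hv : v ≠ 0) {t : ℝ} (ht : 0 ≤ t) :
    gaussianReal 0 v (Ioi t) ≤ ENNReal.ofReal (rexp (-t ^ 2 / (2 * v))) * 2⁻¹ := by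
  have hpdf : ∀ x ∈ Ioi t,
      gaussianPDF 0 v x ≤ ENNReal.ofReal (rexp (-t ^ 2 / (2 * v))) * gaussianPDF t v x := by
    intro x hx
    rw [gaussianPDF, gaussianPDF, ← ENNReal.ofReal_mul (exp_nonneg _),
      gaussianPDFReal_eq_exp_mul t]
    refine ENNReal.ofReal_le_ofReal (mul_le_mul_of_nonneg_right ?_ (gaussianPDFReal_nonneg _ _ _))
    gcongr
    nlinarith [mem_Ioi.1 hx]
  calc gaussianReal 0 v (Ioi t)
      ≤ ∫⁻ x in Ioi t, ENNReal.ofReal (rexp (-t ^ 2 / (2 * v))) * gaussianPDF t v x := by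
        rw [gaussianReal_apply _ hv]
        exact setLIntegral_mono' measurableSet_Ioi hpdf
    _ = ENNReal.ofReal (rexp (-t ^ 2 / (2 * v))) * gaussianReal 0 v (Ioi 0) := by
        have hshift := gaussianReal_preimage_const_add (μ := 0) (v := v) t (Ioi t)
        rw [preimage_const_add_Ioi, sub_self, zero_add] at hshift
        rw [lintegral_const_mul _ (measurable_gaussianPDF _ _), ← gaussianReal_apply _ hv, hshift]
    _ ≤ _ := by gcongr; exact gaussianReal_Ioi_zero_le_half

lemma gaussianPDFReal_le (x : ℝ) : gaussianPDFReal μ v x ≤ (√(2 * π * v))⁻¹ := by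
  rw [gaussianPDFReal]
  refine mul_le_of_le_one_right (by positivity) (exp_le_one_iff.2 ?_)
  exact div_nonpos_of_nonpos_of_nonneg (neg_nonpos.2 (sq_nonneg _)) (by positivity)

lemma gaussianReal_Ioc_le (hv : v ≠ 0) (a b : ℝ) :
    gaussianReal μ v (Ioc a b) ≤ ENNReal.ofReal ((b - a) / √(2 * π * v)) := by
  calc gaussianReal μ v (Ioc a b)
      ≤ ∫⁻ _ in Ioc a b, ENNReal.ofReal (√(2 * π * v))⁻¹ := by
        rw [gaussianReal_apply _ hv]
        exact setLIntegral_mono' measurableSet_Ioc fun x _ ↦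
          ENNReal.ofReal_le_ofReal (gaussianPDFReal_le x)
    _ = _ := by
        rw [setLIntegral_const, volume_Ioc, ← ENNReal.ofReal_mul (by positivity), inv_mul_eq_div]

lemma gaussianReal_Ioi_le_of_nonpos (hv : v ≠ 0) {t : ℝ} (ht : t ≤ 0) :
    gaussianReal 0 v (Ioi t) ≤ ENNReal.ofReal (-t / √(2 * π * v)) + 2⁻¹ := by
  rw [← Ioc_union_Ioi_eq_Ioi ht]
  refine (measure_union_le _ _).trans (add_le_add ?_ gaussianReal_Ioi_zero_le_half)
  simpa using gaussianReal_Ioc_le (μ := 0) hv t 0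

lemma setOf_exp_mul_gaussianPDF_lt_subset (hv : v ≠ 0) (μ' ε : ℝ) :
    {x | ENNReal.ofReal (rexp ε) * gaussianPDF μ' v x < gaussianPDF μ v x}
      ⊆ {x | v * ε < ((x - μ') ^ 2 - (x - μ) ^ 2) / 2} := by
  intro x hx
  simp only [mem_ofPred_eq, gaussianPDF, ← ENNReal.ofReal_mul (exp_nonneg _)] at hx ⊢
  rw [ENNReal.ofReal_lt_ofReal_iff (gaussianPDFReal_pos _ _ _ hv),
    gaussianPDFReal_eq_exp_mul (μ := μ) μ'] at hx
  have hloss := exp_lt_exp.1 (lt_of_mul_lt_mul_right hx (gaussianPDFReal_nonneg _ _ _))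
  have hv' : (0 : ℝ) < v := by positivity
  rw [lt_div_iff₀ (by positivity)] at hloss
  linarith

lemma gaussianReal_apply_le_exp_mul_add (hv : v ≠ 0) (μ' ε : ℝ) {A : Set ℝ}
    (hA : MeasurableSet A) :
    gaussianReal μ v A ≤ ENNReal.ofReal (rexp ε) * gaussianReal μ' v A
      + gaussianReal 0 v {w | v * ε < w * (μ - μ') + (μ - μ') ^ 2 / 2} := by
  have hshift := gaussianReal_preimage_const_add (μ := 0) (v := v) μ
    {x | v * ε < ((x - μ') ^ 2 - (x - μ) ^ 2) / 2}
  have hloss (w : ℝ) :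
      ((μ + w - μ') ^ 2 - (μ + w - μ) ^ 2) / 2 = w * (μ - μ') + (μ - μ') ^ 2 / 2 := by
    ring
  simp only [zero_add, preimage_ofPred_eq, hloss] at hshift
  rw [hshift]
  calc gaussianReal μ v A
      ≤ ENNReal.ofReal (rexp ε) * gaussianReal μ' v A
        + gaussianReal μ v
            {x | ENNReal.ofReal (rexp ε) * gaussianPDF μ' v x < gaussianPDF μ v x} := by
        simp only [gaussianReal_of_var_ne_zero _ hv]
        exact withDensity_apply_le_mul_add (measurable_gaussianPDF _ _)
          (measurable_gaussianPDF _ _) _ hA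
    _ ≤ _ := add_le_add le_rfl (measure_mono (setOf_exp_mul_gaussianPDF_lt_subset hv μ' ε))

lemma gaussianReal_setOf_lt_le_Ioi {a d Δ : ℝ} (ha : 0 ≤ a) (hΔ : 0 < Δ) (hd : |d| ≤ Δ) :
    gaussianReal 0 v {w | a < w * d + d ^ 2 / 2} ≤ gaussianReal 0 v (Ioi (a / Δ - Δ / 2)) := by
  wlog hd0 : 0 ≤ d generalizing d
  · have hreflect : {w | a < w * d + d ^ 2 / 2} = -{w | a < w * -d + (-d) ^ 2 / 2} := by
      ext w
      simp only [mem_neg, mem_ofPred_eq]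
      ring_nf
    rw [hreflect, gaussianReal_apply_neg, neg_zero]
    exact this (by rwa [abs_neg]) (by linarith)
  rw [abs_of_nonneg hd0] at hd
  refine measure_mono fun w (hw : a < w * d + d ^ 2 / 2) ↦ ?_
  rw [mem_Ioi, sub_lt_iff_lt_add, div_lt_iff₀ hΔ]
  nlinarith [mul_nonneg hd0 (sub_nonneg.2 hd), mul_nonneg ha (sub_nonneg.2 hd)]

lemma gaussianReal_Ioi_le_of_le_sq_div (hv : v ≠ 0) {t c : ℝ} (ht : 0 ≤ t)
    (hc : c - 1 / 2 ≤ t ^ 2 / (2 * v)) :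
    gaussianReal 0 v (Ioi t) ≤ ENNReal.ofReal (1.25 * rexp (-c)) := by
  have hexp_half : rexp (1 / 2) ≤ 2.5 := by
    have h : rexp (1 / 2) * rexp (1 / 2) = rexp 1 := by rw [← exp_add]; norm_num
    nlinarith [exp_pos (1 / 2 : ℝ), exp_one_lt_d9]
  refine (gaussianReal_Ioi_le_exp hv ht).trans ?_
  rw [← ENNReal.ofReal_ofNat, ← ENNReal.ofReal_inv_of_pos two_pos,
    ← ENNReal.ofReal_mul (exp_nonneg _)]
  refine ENNReal.ofReal_le_ofReal ?_
  calc rexp (-t ^ 2 / (2 * v)) * 2⁻¹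
      ≤ rexp (1 / 2) * rexp (-c) * 2⁻¹ := by rw [← exp_add, neg_div]; gcongr; linarith
    _ ≤ 2.5 * rexp (-c) * 2⁻¹ := by gcongr
    _ = 1.25 * rexp (-c) := by ring

lemma gaussianReal_Ioi_le_of_nonpos_of_le (hv : v ≠ 0) {t c : ℝ} (ht : t ≤ 0)
    (hlength : -t / √(2 * π * v) ≤ 1 / 3) (hc : c ≤ 1 / 4) :
    gaussianReal 0 v (Ioi t) ≤ ENNReal.ofReal (1.25 * rexp (-c)) := by
  refine (gaussianReal_Ioi_le_of_nonpos hv ht).trans ?_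
  rw [← ENNReal.ofReal_ofNat, ← ENNReal.ofReal_inv_of_pos two_pos,
    ← ENNReal.ofReal_add (div_nonneg (neg_nonneg.2 ht) (sqrt_nonneg _)) (by norm_num)]
  exact ENNReal.ofReal_le_ofReal (by nlinarith [add_one_le_exp (-c)])

lemma gaussianReal_Ioi_le_of_var_eq {Δ ε c : ℝ} (hΔ : 0 < Δ) (hε : 0 < ε) (hε1 : ε ≤ 1)
    (hc : 1 / 5 ≤ c) (hv : (v : ℝ) = 2 * Δ ^ 2 * c / ε ^ 2) :
    gaussianReal 0 v (Ioi (v * ε / Δ - Δ / 2)) ≤ ENNReal.ofReal (1.25 * rexp (-c)) := by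
  have hv0 : v ≠ 0 := by
    rw [← NNReal.coe_ne_zero, hv]
    positivity
  have ht : v * ε / Δ - Δ / 2 = Δ * (4 * c - ε) / (2 * ε) := by
    rw [hv]
    field_simp
    ring
  rw [ht]
  rcases le_or_gt ε (4 * c) with hτ | hτ
  · refine gaussianReal_Ioi_le_of_le_sq_div hv0 (by have := sub_nonneg.2 hτ; positivity) ?_
    have hsq : (Δ * (4 * c - ε) / (2 * ε)) ^ 2 / (2 * v) = (4 * c - ε) ^ 2 / (16 * c) := by
      rw [hv]
      field_simp
      ring
    rw [hsq, le_div_iff₀ (by positivity)]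
    nlinarith
  · refine gaussianReal_Ioi_le_of_nonpos_of_le hv0
      (div_nonpos_of_nonpos_of_nonneg (by nlinarith) (by positivity)) ?_ (by linarith)
    have hsqrt : 3 * Δ / 2 ≤ √(2 * π * v) := by
      rw [le_sqrt (by positivity) (by positivity), hv]
      have : 2 * Δ ^ 2 * c ≤ 2 * Δ ^ 2 * c / ε ^ 2 :=
        le_div_self (by positivity) (by positivity) (by nlinarith)
      nlinarith [pi_gt_three]
    rw [div_le_iff₀ (by positivity), ← neg_div, div_le_iff₀ (by positivity)]
    nlinarith

theorem gaussianReal_apply_le_of_abs_sub_le {μ' Δ ε δ : ℝ} (hΔ : 0 < Δ)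
    (hμ : |μ - μ'| ≤ Δ) (hε : 0 < ε) (hε1 : ε ≤ 1) (hδ : 0 < δ) (hδ1 : δ ≤ 1)
    (hv : (v : ℝ) = 2 * Δ ^ 2 * log (1.25 / δ) / ε ^ 2) {A : Set ℝ} (hA : MeasurableSet A) :
    gaussianReal μ v A
      ≤ ENNReal.ofReal (rexp ε) * gaussianReal μ' v A + ENNReal.ofReal δ := by
  have hc : 1 / 5 ≤ log (1.25 / δ) := by
    refine le_trans ?_ (one_sub_inv_le_log_of_pos (by positivity))
    rw [inv_div]
    linarith [div_le_div_of_nonneg_right hδ1 (by norm_num : (0 : ℝ) ≤ 1.25)]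
  have hδc : 1.25 * rexp (-log (1.25 / δ)) = δ := by
    rw [exp_neg, exp_log (by positivity)]
    field_simp
  have hv0 : v ≠ 0 := by
    rw [← NNReal.coe_ne_zero, hv]
    have := hc.trans_lt' (by norm_num : (0 : ℝ) < 1 / 5)
    positivity
  calc gaussianReal μ v A
      ≤ ENNReal.ofReal (rexp ε) * gaussianReal μ' v A
        + gaussianReal 0 v {w | v * ε < w * (μ - μ') + (μ - μ') ^ 2 / 2} :=
        gaussianReal_apply_le_exp_mul_add hv0 μ' ε hA
    _ ≤ ENNReal.ofReal (rexp ε) * gaussianReal μ' v A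
        + gaussianReal 0 v (Ioi (v * ε / Δ - Δ / 2)) :=
        add_le_add le_rfl (gaussianReal_setOf_lt_le_Ioi (by positivity) hΔ hμ)
    _ ≤ _ := add_le_add le_rfl (hδc ▸ gaussianReal_Ioi_le_of_var_eq hΔ hε hε1 hc hv)

end ProbabilityTheory

theorem gaussian_mechanism_mean_dp_general
    (n : ℕ) (μ L : ℝ) (hL : 0 < L)
    (x x' : Fin n → ℝ)
    (hx : ∀ i, x i ∈ Set.Icc (μ - L) (μ + L))
    (hx' : ∀ i, x' i ∈ Set.Icc (μ - L) (μ + L))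
    (hdiff : ∃ i, x i ≠ x' i ∧ ∀ j, j ≠ i → x j = x' j)
    (ε δ : ℝ) (hε : 0 < ε) (hε1 : ε ≤ 1) (hδ : 0 < δ) (hδ1 : δ ≤ 1)
    (σDP2 : ℝ≥0) (hσ : (σDP2 : ℝ) = 8 * L ^ 2 * Real.log (1.25 / δ) / ε ^ 2)
    (S : Set ℝ) (hS : MeasurableSet S) :
    gaussianReal 0 σDP2 {z | (∑ i, x i) / n + z / n ∈ S}
      ≤ ENNReal.ofReal (Real.exp ε) *
          gaussianReal 0 σDP2 {z | (∑ i, x' i) / n + z / n ∈ S}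
        + ENNReal.ofReal δ := by
  obtain ⟨i, -, hi⟩ := hdiff
  have hsensitivity : |∑ j, x j - ∑ j, x' j| ≤ 2 * L := by
    rw [← Finset.sum_sub_distrib,
      Finset.sum_eq_single i (fun j _ hj ↦ sub_eq_zero.2 (hi j hj)) (by simp), abs_le]
    constructor <;> linarith [(hx i).1, (hx i).2, (hx' i).1, (hx' i).2]
  have hpreimage (y : Fin n → ℝ) :
      {z | (∑ j, y j) / n + z / n ∈ S} = (∑ j, y j + ·) ⁻¹' ((· / n) ⁻¹' S) := by
    ext z
    simp [add_div]
  rw [hpreimage, hpreimage, gaussianReal_preimage_const_add, gaussianReal_preimage_const_add,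
    zero_add, zero_add]
  exact gaussianReal_apply_le_of_abs_sub_le (by positivity) hsensitivity hε hε1 hδ hδ1
    (by rw [hσ]; ring) (hS.preimage (by fun_prop))

/-- Gaussian mechanism guarantee for releasing a sample mean. -/
theorem gaussian_mechanism_mean_dp
    (n : ℕ) (hn : 1 ≤ n) (μ L : ℝ) (hL : 0 < L)
    (x x' : Fin n → ℝ)
    (hx : ∀ i, x i ∈ Set.Icc (μ - L) (μ + L))
    (hx' : ∀ i, x' i ∈ Set.Icc (μ - L) (μ + L))
    (hdiff : ∃ i, x i ≠ x' i ∧ ∀ j, j ≠ i → x j = x' j)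
    (ε δ : ℝ) (hε : 0 < ε) (hε1 : ε ≤ 1) (hδ : 0 < δ) (hδ1 : δ ≤ 1)
    (σDP2 : ℝ≥0) (hσ : (σDP2 : ℝ) = 8 * L ^ 2 * Real.log (1.25 / δ) / ε ^ 2)
    (S : Set ℝ) (hS : MeasurableSet S) :
    gaussianReal 0 σDP2 {z | (∑ i, x i) / n + z / n ∈ S}
      ≤ ENNReal.ofReal (Real.exp ε) *
          gaussianReal 0 σDP2 {z | (∑ i, x' i) / n + z / n ∈ S}
        + ENNReal.ofReal δ :=
  gaussian_mechanism_mean_dp_general n μ L hL x x' hx hx' hdiff ε δ hε hε1 hδ hδ1 σDP2 hσ S hS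
end

section
/- Let X_1, X_2, …, X_T be independent square-integrable real random variables, each with variance σ². Let κ ≥ 1, let 0 = t_0 < t_1 < ⋯ < t_κ ≤ T be integers, let w_1,…,w_κ ∈ ℝ, and for t ∈ [T] let X̄^{(t)} = (1/t)∑_{i=1}^t X_i denote the running sample mean. Then Var( ∑_{j=1}^κ w_j X̄^{(t_j)} ) = σ² ∑_{i=1}^κ (t_i − t_{i−1}) ( ∑_{j=i}^κ w_j/t_j )². -/
open MeasureTheory ProbabilityTheory Finset

/-!
Each running mean is a linear combination of the data, so the statistic equals `∑ i, c i * X i`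
with `c i = ∑ {j | i < t j}, w j / t j`, and by independence its variance is `σ² ∑ i, c i ^ 2`.
The coefficient `c i` only depends on the block `t (k - 1) ≤ i < t k` containing `i`, where it
equals `∑ j ∈ [k, κ], w j / t j`; grouping the indices by blocks gives the formula.
-/

theorem variance_sum_const_mul_of_iIndepFun {Ω ι : Type*} [MeasurableSpace Ω] {P : Measure Ω}
    {X : ι → Ω → ℝ} (hindep : iIndepFun X P) {s : Finset ι} (hmem : ∀ i ∈ s, MemLp (X i) 2 P)
    (c : ι → ℝ) :
    variance (fun ω => ∑ i ∈ s, c i * X i ω) P = ∑ i ∈ s, c i ^ 2 * variance (X i) P := by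
  have hsum : (fun ω => ∑ i ∈ s, c i * X i ω) = ∑ i ∈ s, fun ω => c i * X i ω := by
    funext ω
    simp only [Finset.sum_apply]
  rw [hsum, IndepFun.variance_sum (fun i hi => (hmem i hi).const_mul (c i))
    fun i _ j _ hij => (hindep.indepFun hij).comp (measurable_const_mul (c i))
      (measurable_const_mul (c j))]
  exact sum_congr rfl fun i _ => variance_const_mul (c i) (X i) P

theorem sum_mul_sum_range_eq_sum_range {R : Type*} [NonUnitalNonAssocSemiring R]
    {s : Finset ℕ} {t : ℕ → ℕ} {N : ℕ} (ht : ∀ j ∈ s, t j ≤ N) (a x : ℕ → R) :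
    ∑ j ∈ s, a j * ∑ i ∈ range (t j), x i
      = ∑ i ∈ range N, (∑ j ∈ s with i < t j, a j) * x i := by
  simp only [mul_sum, sum_mul]
  refine sum_comm' fun j i => ?_
  simp only [mem_range, mem_filter]
  constructor
  · rintro ⟨hj, hi⟩
    exact ⟨⟨hj, hi⟩, hi.trans_le (ht j hj)⟩
  · rintro ⟨⟨hj, hi⟩, -⟩
    exact ⟨hj, hi⟩

theorem sum_range_eq_sum_Icc_sum_Ico {M : Type*} [AddCommMonoid M] (f : ℕ → M) {t : ℕ → ℕ}
    (h0 : t 0 = 0) {n : ℕ} (ht : ∀ k < n, t k ≤ t (k + 1)) :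
    ∑ i ∈ range (t n), f i = ∑ k ∈ Icc 1 n, ∑ i ∈ Ico (t (k - 1)) (t k), f i := by
  induction n with
  | zero => simp [h0]
  | succ n ih =>
    rw [sum_Icc_succ_top (by omega), ← ih fun k hk => ht k (by omega), Nat.add_sub_cancel,
      sum_range_add_sum_Ico f (ht n n.lt_succ_self)]

theorem filter_lt_eq_Icc_of_mem_Ico {t : ℕ → ℕ} {κ k i : ℕ} (ht : MonotoneOn t (Set.Iic κ))
    (hk : k ∈ Icc 1 κ) (hi : i ∈ Ico (t (k - 1)) (t k)) :
    {j ∈ Icc 1 κ | i < t j} = Icc k κ := by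
  simp only [mem_Icc, mem_Ico] at hk hi
  ext j
  simp only [mem_filter, mem_Icc]
  constructor
  · rintro ⟨⟨-, hjκ⟩, hij⟩
    refine ⟨?_, hjκ⟩
    by_contra! hjk
    have : t j ≤ t (k - 1) :=
      ht (Set.mem_Iic.2 hjκ) (Set.mem_Iic.2 (by omega)) (by omega)
    omega
  · rintro ⟨hkj, hjκ⟩
    have : t k ≤ t j := ht (Set.mem_Iic.2 hk.2) (Set.mem_Iic.2 hjκ) hkj
    exact ⟨⟨by omega, hjκ⟩, by omega⟩

theorem variance_linear_statistic_running_means_general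
    (Ω : Type*) [MeasurableSpace Ω] (P : Measure Ω)
    (X : ℕ → Ω → ℝ) (σ2 : ℝ)
    (hindep : iIndepFun X P)
    (hmem : ∀ i, MemLp (X i) 2 P)
    (hvar : ∀ i, variance (X i) P = σ2)
    (κ : ℕ) (t : ℕ → ℕ) (ht0 : t 0 = 0)
    (hmono : ∀ i < κ, t i < t (i + 1))
    (w : ℕ → ℝ) :
    variance (fun ω => ∑ j ∈ Icc 1 κ,
        w j * ((1 / (t j : ℝ)) * ∑ i ∈ range (t j), X i ω)) P
      = σ2 * ∑ i ∈ Icc 1 κ,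
          ((t i : ℝ) - (t (i - 1) : ℝ)) * (∑ j ∈ Icc i κ, w j / (t j : ℝ)) ^ 2 := by
  have ht : MonotoneOn t (Set.Iic κ) := (strictMonoOn_Iic_of_lt_succ hmono).monotoneOn
  have hstat : (fun ω => ∑ j ∈ Icc 1 κ, w j * ((1 / (t j : ℝ)) * ∑ i ∈ range (t j), X i ω))
      = fun ω => ∑ i ∈ range (t κ), (∑ j ∈ Icc 1 κ with i < t j, w j / (t j : ℝ)) * X i ω := by
    funext ω
    have htκ : ∀ j ∈ Icc 1 κ, t j ≤ t κ := fun j hj =>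
      ht (Set.mem_Iic.2 (mem_Icc.1 hj).2) Set.self_mem_Iic (mem_Icc.1 hj).2
    rw [← sum_mul_sum_range_eq_sum_range htκ]
    exact sum_congr rfl fun j _ => by ring
  rw [hstat, variance_sum_const_mul_of_iIndepFun hindep fun i _ => hmem i]
  simp only [hvar, ← sum_mul]
  rw [mul_comm, sum_range_eq_sum_Icc_sum_Ico _ ht0 fun k hk => (hmono k hk).le]
  refine congrArg _ (sum_congr rfl fun k hk => ?_)
  have hkκ : k ≤ κ := (mem_Icc.1 hk).2
  have hle : t (k - 1) ≤ t k := ht (Set.mem_Iic.2 (by omega)) (Set.mem_Iic.2 hkκ) (by omega)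
  rw [sum_congr rfl fun i hi => by rw [filter_lt_eq_Icc_of_mem_Ico ht hk hi], sum_const,
    Nat.card_Ico, nsmul_eq_mul, Nat.cast_sub hle]

/-- Variance of a linear statistic of running sample means of an independent data stream. -/
theorem variance_linear_statistic_running_means
    (Ω : Type*) [MeasurableSpace Ω] (P : Measure Ω) [IsProbabilityMeasure P]
    (T : ℕ) (hT : 1 ≤ T) (X : ℕ → Ω → ℝ) (σ2 : ℝ)
    (hindep : iIndepFun X P)
    (hmem : ∀ i, MemLp (X i) 2 P)
    (hvar : ∀ i, variance (X i) P = σ2)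
    (κ : ℕ) (hκ : 1 ≤ κ) (t : ℕ → ℕ) (ht0 : t 0 = 0)
    (hmono : ∀ i < κ, t i < t (i + 1)) (htT : t κ ≤ T)
    (w : ℕ → ℝ) :
    variance (fun ω => ∑ j ∈ Icc 1 κ,
        w j * ((1 / (t j : ℝ)) * ∑ i ∈ range (t j), X i ω)) P
      = σ2 * ∑ i ∈ Icc 1 κ,
          ((t i : ℝ) - (t (i - 1) : ℝ)) * (∑ j ∈ Icc i κ, w j / (t j : ℝ)) ^ 2 :=
  variance_linear_statistic_running_means_general Ω P X σ2 hindep hmem hvar κ t ht0 hmono w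
end

section
/- Let κ ≥ 1 be an integer, d > 0 a real number, and set t_i = i·d for i ∈ {0,1,…,κ}. Let σ_b² ≥ 0 and σ_DP² ≥ 0. Then for every w = (w_1,…,w_κ) ∈ ℝ^κ with ∑_{j=1}^κ w_j = 1, σ_b² ∑_{i=1}^κ (t_i − t_{i−1}) ( ∑_{j=i}^κ w_j/t_j )² + σ_DP² ∑_{i=1}^κ ( ∑_{j=i}^κ w_j/t_j )² ≥ σ_b²/t_κ + κ·σ_DP²/t_κ², with equality when w_1 = ⋯ = w_{κ−1} = 0 and w_κ = 1. -/
open Finset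

/-- Under PM-I with equally spaced query times `t i = i * d`, the variance of the linear
statistic is minimized over weights summing to 1 by keeping only the last update. -/
theorem keeping_last_update_optimal
    (κ : ℕ) (hκ : 1 ≤ κ) (d : ℝ) (hd : 0 < d)
    (σb2 σDP2 : ℝ) (hσb : 0 ≤ σb2) (hσDP : 0 ≤ σDP2) :
    (∀ w : ℕ → ℝ, ∑ j ∈ Icc 1 κ, w j = 1 →
      σb2 * ∑ i ∈ Icc 1 κ, ((i : ℝ) * d - ((i : ℝ) - 1) * d) *
          (∑ j ∈ Icc i κ, w j / ((j : ℝ) * d)) ^ 2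
        + σDP2 * ∑ i ∈ Icc 1 κ, (∑ j ∈ Icc i κ, w j / ((j : ℝ) * d)) ^ 2
      ≥ σb2 / ((κ : ℝ) * d) + (κ : ℝ) * σDP2 / ((κ : ℝ) * d) ^ 2) ∧
    (σb2 * ∑ i ∈ Icc 1 κ, ((i : ℝ) * d - ((i : ℝ) - 1) * d) *
          (∑ j ∈ Icc i κ, (if j = κ then (1 : ℝ) else 0) / ((j : ℝ) * d)) ^ 2
        + σDP2 * ∑ i ∈ Icc 1 κ,
            (∑ j ∈ Icc i κ, (if j = κ then (1 : ℝ) else 0) / ((j : ℝ) * d)) ^ 2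
      = σb2 / ((κ : ℝ) * d) + (κ : ℝ) * σDP2 / ((κ : ℝ) * d) ^ 2) := by
  have hκR : (1 : ℝ) ≤ (κ : ℝ) := by exact_mod_cast hκ
  have hκ0 : (0 : ℝ) < (κ : ℝ) := lt_of_lt_of_le one_pos hκR
  have hcard : (Icc 1 κ).card = κ := by rw [Nat.card_Icc]; omega
  have hrhs : σb2 / ((κ : ℝ) * d) + (κ : ℝ) * σDP2 / ((κ : ℝ) * d) ^ 2
      = (σb2 * d + σDP2) / ((κ : ℝ) * d ^ 2) := by
    field_simp
  constructor
  · intro w hw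
    set f : ℕ → ℝ := fun i => ∑ j ∈ Icc i κ, w j / ((j : ℝ) * d) with hf
    have hsum : ∑ i ∈ Icc 1 κ, f i = 1 / d := by
      have hcomm : ∑ i ∈ Icc 1 κ, ∑ j ∈ Icc i κ, w j / ((j : ℝ) * d)
          = ∑ j ∈ Icc 1 κ, ∑ i ∈ Icc 1 j, w j / ((j : ℝ) * d) :=
        Finset.sum_comm' (fun i j => by simp only [Finset.mem_Icc]; omega)
      have hinner : ∀ j ∈ Icc 1 κ, ∑ i ∈ Icc 1 j, w j / ((j : ℝ) * d) = w j / d := by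
        intro j hj
        simp only [Finset.mem_Icc] at hj
        have hj0 : (j : ℝ) ≠ 0 := Nat.cast_ne_zero.mpr (by omega)
        rw [Finset.sum_const, Nat.card_Icc]
        simp only [Nat.add_sub_cancel, nsmul_eq_mul]
        field_simp
      rw [hf, hcomm, Finset.sum_congr rfl hinner, ← Finset.sum_div, hw]
    have hCS : (1 / d) ^ 2 ≤ (κ : ℝ) * ∑ i ∈ Icc 1 κ, f i ^ 2 := by
      have := sq_sum_le_card_mul_sum_sq (s := Icc 1 κ) (f := f)
      rw [hsum, hcard] at this
      exact_mod_cast this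
    have hfirst : ∑ i ∈ Icc 1 κ, ((i : ℝ) * d - ((i : ℝ) - 1) * d) * f i ^ 2
        = d * ∑ i ∈ Icc 1 κ, f i ^ 2 := by
      rw [Finset.mul_sum]
      exact Finset.sum_congr rfl (fun i _ => by ring)
    have h2 : ∑ i ∈ Icc 1 κ, (∑ j ∈ Icc i κ, w j / ((j : ℝ) * d)) ^ 2
        = ∑ i ∈ Icc 1 κ, f i ^ 2 := rfl
    rw [hrhs, h2, hfirst, ge_iff_le, div_le_iff₀ (by positivity)]
    set S := ∑ i ∈ Icc 1 κ, f i ^ 2 with hS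
    have h3 : (σb2 * d + σDP2) * d ^ 2 * ((1 / d) ^ 2)
        ≤ (σb2 * d + σDP2) * d ^ 2 * ((κ : ℝ) * S) :=
      mul_le_mul_of_nonneg_left hCS (by positivity)
    have h4 : (σb2 * d + σDP2) * d ^ 2 * ((1 / d) ^ 2) = σb2 * d + σDP2 := by
      field_simp
    nlinarith [h3, h4]
  · have hinner : ∀ i ∈ Icc 1 κ,
        ∑ j ∈ Icc i κ, (if j = κ then (1 : ℝ) else 0) / ((j : ℝ) * d)
          = 1 / ((κ : ℝ) * d) := by
      intro i hi
      simp only [Finset.mem_Icc] at hi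
      have : ∀ j ∈ Icc i κ, (if j = κ then (1 : ℝ) else 0) / ((j : ℝ) * d)
          = if j = κ then 1 / ((κ : ℝ) * d) else 0 := by
        intro j hj
        split <;> simp_all
      rw [Finset.sum_congr rfl this, Finset.sum_ite_eq' (Icc i κ) κ]
      simp [Finset.mem_Icc, hi.2]
    have e1 : ∑ i ∈ Icc 1 κ, ((i : ℝ) * d - ((i : ℝ) - 1) * d) *
          (∑ j ∈ Icc i κ, (if j = κ then (1 : ℝ) else 0) / ((j : ℝ) * d)) ^ 2
        = (κ : ℝ) * (d * (1 / ((κ : ℝ) * d)) ^ 2) := by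
      rw [Finset.sum_congr rfl
        (fun i hi => by rw [hinner i hi]; ring_nf : ∀ i ∈ Icc 1 κ, _ = d * (1 / ((κ : ℝ) * d)) ^ 2),
        Finset.sum_const, hcard, nsmul_eq_mul]
    have e2 : ∑ i ∈ Icc 1 κ,
          (∑ j ∈ Icc i κ, (if j = κ then (1 : ℝ) else 0) / ((j : ℝ) * d)) ^ 2
        = (κ : ℝ) * (1 / ((κ : ℝ) * d)) ^ 2 := by
      rw [Finset.sum_congr rfl (fun i hi => by rw [hinner i hi]), Finset.sum_const, hcard,
        nsmul_eq_mul]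
    rw [e1, e2]
    field_simp
end

section
/- For every integer κ ≥ 1, ∑_{i=1}^κ ( ∑_{j=i}^κ 1/j )² = 2κ − H_κ, where H_κ = ∑_{i=1}^κ 1/i is the κ-th harmonic number. -/
/-!
Write `T i = ∑_{j=i}^κ 1/j`. Summation by parts against `T i ^ 2 - T (i+1) ^ 2 = (1/i) (2 T i - 1/i)`
turns `∑ T i ^ 2` into `∑ i (1/i) (2 T i - 1/i) = 2 ∑ T i - H_κ`, and `∑ T i = ∑ j (1/j) = κ`
by exchanging the order of summation.
-/

open Finset

section TailSums

variable {R : Type*} [CommRing R]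

theorem sum_Icc_sum_Icc_tail (f : ℕ → R) (κ : ℕ) :
    ∑ i ∈ Icc 1 κ, ∑ j ∈ Icc i κ, f j = ∑ j ∈ Icc 1 κ, j * f j := by
  induction κ with
  | zero => simp
  | succ n ih =>
    have tail_succ : ∀ i ∈ Icc 1 n, ∑ j ∈ Icc i (n + 1), f j = ∑ j ∈ Icc i n, f j + f (n + 1) :=
      fun i hi => sum_Icc_succ_top (by grind) f
    rw [sum_Icc_succ_top (by omega), sum_congr rfl tail_succ, sum_add_distrib, ih, sum_const,
      Nat.card_Icc, Icc_self, sum_singleton, sum_Icc_succ_top (by omega), nsmul_eq_mul]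
    push_cast
    ring

theorem sum_Icc_sq_sum_Icc_tail (f : ℕ → R) (κ : ℕ) :
    ∑ i ∈ Icc 1 κ, (∑ j ∈ Icc i κ, f j) ^ 2
      = ∑ i ∈ Icc 1 κ, i * f i * (2 * ∑ j ∈ Icc i κ, f j - f i) := by
  induction κ with
  | zero => simp
  | succ n ih =>
    have tail_succ : ∀ i ∈ Icc 1 n, ∑ j ∈ Icc i (n + 1), f j = ∑ j ∈ Icc i n, f j + f (n + 1) :=
      fun i hi => sum_Icc_succ_top (by grind) f
    have expand_sq : ∑ i ∈ Icc 1 n, (∑ j ∈ Icc i (n + 1), f j) ^ 2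
        = ∑ i ∈ Icc 1 n, (∑ j ∈ Icc i n, f j) ^ 2
          + 2 * f (n + 1) * ∑ i ∈ Icc 1 n, ∑ j ∈ Icc i n, f j + n * f (n + 1) ^ 2 := by
      rw [sum_congr rfl fun i hi => congrArg (· ^ 2) (tail_succ i hi)]
      simp only [add_sq, sum_add_distrib, ← sum_mul, ← mul_sum, sum_const, Nat.card_Icc,
        nsmul_eq_mul]
      push_cast
      ring
    have expand_rhs : ∑ i ∈ Icc 1 n, i * f i * (2 * ∑ j ∈ Icc i (n + 1), f j - f i)
        = ∑ i ∈ Icc 1 n, i * f i * (2 * ∑ j ∈ Icc i n, f j - f i)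
          + 2 * f (n + 1) * ∑ i ∈ Icc 1 n, i * f i := by
      rw [mul_sum, ← sum_add_distrib]
      exact sum_congr rfl fun i hi => by rw [tail_succ i hi]; ring
    rw [sum_Icc_succ_top (by omega), sum_Icc_succ_top (a := 1) (by omega), expand_sq, expand_rhs,
      ih, sum_Icc_sum_Icc_tail, Icc_self, sum_singleton]
    push_cast
    ring

end TailSums

theorem sum_sq_tail_harmonic_general (κ : ℕ) :
    ∑ i ∈ Icc 1 κ, (∑ j ∈ Icc i κ, (1 : ℝ) / j) ^ 2
      = 2 * κ - ∑ i ∈ Icc 1 κ, (1 : ℝ) / i := by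
  have mul_one_div_cast : ∀ i ∈ Icc 1 κ, (i : ℝ) * (1 / i) = 1 := fun i hi => by
    have : (i : ℝ) ≠ 0 := by exact_mod_cast (by grind : i ≠ 0)
    field_simp
  calc ∑ i ∈ Icc 1 κ, (∑ j ∈ Icc i κ, (1 : ℝ) / j) ^ 2
      = ∑ i ∈ Icc 1 κ, (2 * ∑ j ∈ Icc i κ, (1 : ℝ) / j - 1 / i) := by
        rw [sum_Icc_sq_sum_Icc_tail]
        exact sum_congr rfl fun i hi => by rw [mul_one_div_cast i hi, one_mul]
    _ = 2 * ∑ i ∈ Icc 1 κ, (i : ℝ) * (1 / i) - ∑ i ∈ Icc 1 κ, (1 : ℝ) / i := by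
        rw [sum_sub_distrib, ← mul_sum, sum_Icc_sum_Icc_tail]
    _ = 2 * κ - ∑ i ∈ Icc 1 κ, (1 : ℝ) / i := by
        rw [sum_congr rfl mul_one_div_cast, sum_const, Nat.card_Icc, nsmul_one]
        simp

/-- `∑_{i=1}^κ (∑_{j=i}^κ 1/j)² = 2κ − H_κ`. -/
theorem sum_sq_tail_harmonic (κ : ℕ) (hκ : 1 ≤ κ) :
    ∑ i ∈ Icc 1 κ, (∑ j ∈ Icc i κ, (1 : ℝ) / j) ^ 2
      = 2 * κ - ∑ i ∈ Icc 1 κ, (1 : ℝ) / i :=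
  sum_sq_tail_harmonic_general κ
end

section
/- Let κ ≥ 1 and let 0 < t_1 < t_2 < ⋯ < t_κ be positive reals, with t_0 = 0. Then ∑_{i=1}^κ (t_i − t_{i−1}) ( ∑_{j=i}^κ 1/t_j )² = ∑_{i=1}^κ (2i−1)/t_i. -/
open Finset

private lemma tele (t : ℕ → ℝ) (ht0 : t 0 = 0) :
    ∀ κ : ℕ, ∑ i ∈ Icc 1 κ, (t i - t (i - 1)) = t κ := by
  intro κ
  induction κ with
  | zero => simp [ht0]
  | succ n ih =>
    rw [Finset.sum_Icc_succ_top (by omega), ih]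
    simp

private lemma lemB (t : ℕ → ℝ) (ht0 : t 0 = 0) :
    ∀ κ : ℕ, (∀ j, 1 ≤ j → j ≤ κ → 0 < t j) →
    ∑ i ∈ Icc 1 κ, (t i - t (i - 1)) * (∑ j ∈ Icc i κ, 1 / t j) = (κ : ℝ) := by
  intro κ
  induction κ with
  | zero => simp
  | succ n ih =>
    intro hpos
    have hT : t (n + 1) ≠ 0 := ne_of_gt (hpos (n + 1) (by omega) le_rfl)
    rw [Finset.sum_Icc_succ_top (by omega)]
    have hinner : ∀ i ∈ Icc 1 n,
        (t i - t (i - 1)) * (∑ j ∈ Icc i (n + 1), 1 / t j)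
          = (t i - t (i - 1)) * (∑ j ∈ Icc i n, 1 / t j)
            + (t i - t (i - 1)) * (1 / t (n + 1)) := by
      intro i hi
      rw [Finset.sum_Icc_succ_top (by exact (Finset.mem_Icc.mp hi).2.trans (by omega))]
      ring
    rw [Finset.sum_congr rfl hinner, Finset.sum_add_distrib,
      ih (fun j hj hjn => hpos j hj (by omega)), ← Finset.sum_mul,
      tele t ht0, Finset.Icc_self, Finset.sum_singleton]
    push_cast
    field_simp
    ring

private lemma aux (t : ℕ → ℝ) (ht0 : t 0 = 0) :
    ∀ κ : ℕ, (∀ j, 1 ≤ j → j ≤ κ → 0 < t j) →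
    ∑ i ∈ Icc 1 κ, (t i - t (i - 1)) * (∑ j ∈ Icc i κ, 1 / t j) ^ 2
      = ∑ i ∈ Icc 1 κ, (2 * (i : ℝ) - 1) / t i := by
  intro κ
  induction κ with
  | zero => simp
  | succ n ih =>
    intro hpos
    have hT : t (n + 1) ≠ 0 := ne_of_gt (hpos (n + 1) (by omega) le_rfl)
    rw [Finset.sum_Icc_succ_top (a := 1) (b := n) (by omega),
      Finset.sum_Icc_succ_top (a := 1) (b := n) (by omega)]
    have hinner : ∀ i ∈ Icc 1 n,
        (t i - t (i - 1)) * (∑ j ∈ Icc i (n + 1), 1 / t j) ^ 2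
          = (t i - t (i - 1)) * (∑ j ∈ Icc i n, 1 / t j) ^ 2
            + (2 * (1 / t (n + 1))) * ((t i - t (i - 1)) * (∑ j ∈ Icc i n, 1 / t j))
            + (1 / t (n + 1)) ^ 2 * (t i - t (i - 1)) := by
      intro i hi
      rw [Finset.sum_Icc_succ_top (by exact (Finset.mem_Icc.mp hi).2.trans (by omega))]
      ring
    rw [Finset.sum_congr rfl hinner, Finset.sum_add_distrib, Finset.sum_add_distrib,
      ih (fun j hj hjn => hpos j hj (by omega)), ← Finset.mul_sum, ← Finset.mul_sum,
      lemB t ht0 n (fun j hj hjn => hpos j hj (by omega)), tele t ht0]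
    have : (Nat.succ n : ℝ) - 1 = (n : ℝ) := by push_cast; ring
    rw [Finset.Icc_self, Finset.sum_singleton]
    have key : 2 * (1 / t (n + 1)) * (n : ℝ) + (1 / t (n + 1)) ^ 2 * t n
          + (t (n + 1) - t n) * (1 / t (n + 1)) ^ 2
        = (2 * ((n : ℝ) + 1) - 1) / t (n + 1) := by
      field_simp
      ring
    push_cast at key ⊢
    linarith [key]

/-- Abel-summation identity for the data-noise contribution to the variance of the
mean-of-means statistic. -/
theorem abel_identity_mean_of_means
    (κ : ℕ) (hκ : 1 ≤ κ) (t : ℕ → ℝ) (ht0 : t 0 = 0)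
    (hpos : 0 < t 1) (hmono : ∀ i, 1 ≤ i → i < κ → t i < t (i + 1)) :
    ∑ i ∈ Icc 1 κ, (t i - t (i - 1)) * (∑ j ∈ Icc i κ, 1 / t j) ^ 2
      = ∑ i ∈ Icc 1 κ, (2 * (i : ℝ) - 1) / t i := by
  apply aux t ht0
  intro j hj
  induction j with
  | zero => omega
  | succ n ih =>
    intro hle
    rcases Nat.eq_or_lt_of_le hj with h | h
    · rw [← h]; exact hpos
    · have hn : 1 ≤ n := by omega
      have := ih hn (by omega)
      exact this.trans (hmono n hn (by omega))
end

section
/- Let κ ≥ 1 and let t_1 < t_2 < ⋯ < t_κ be positive integers with t_i ≥ i for all i ∈ [κ] (and t_0 = 0), and let σ_b² ≥ 0, σ_DP² ≥ 0. Then (σ_b²/κ²) ∑_{i=1}^κ (t_i − t_{i−1}) ( ∑_{j=i}^κ 1/t_j )² + (σ_DP²/κ²) ∑_{i=1}^κ ( ∑_{j=i}^κ 1/t_j )² ≤ 2(σ_b² + σ_DP²)/κ. -/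
/-!
Expanding the squares and exchanging the order of summation writes
`∑ᵢ wᵢ (∑_{j ≥ i} aⱼ)²` as `∑_{j,k} W(min j k) aⱼ aₖ` with `W(m) = ∑_{i ≤ m} wᵢ`.
For both sums in the variance the partial weight is `W(m) ≤ tₘ` (it is `tₘ - t₀` resp. `m`),
so with `aⱼ = 1/tⱼ` each term is at most `t_min / (tⱼ tₖ) = 1 / t_max ≤ 1 / max j k`,
and `∑_{j,k ≤ κ} 1 / max j k = ∑_{m ≤ κ} (2m - 1)/m ≤ 2κ`.
-/

open Finset

lemma sum_Icc_one_sub_pred (f : ℕ → ℝ) (m : ℕ) :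
    ∑ i ∈ Icc 1 m, (f i - f (i - 1)) = f m - f 0 := by
  induction m with
  | zero => simp
  | succ m ih => rw [sum_Icc_succ_top (by omega), ih, Nat.add_sub_cancel]; ring

lemma sum_Icc_one_sum_Icc_one_inv_max_le (n : ℕ) :
    ∑ j ∈ Icc 1 n, ∑ k ∈ Icc 1 n, (1 : ℝ) / (max j k : ℕ) ≤ 2 * n := by
  induction n with
  | zero => simp
  | succ n ih =>
    have h_new : ∀ j ∈ Icc 1 (n + 1), (1 : ℝ) / (max j (n + 1) : ℕ) = 1 / (n + 1 : ℕ) ∧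
        (1 : ℝ) / (max (n + 1) j : ℕ) = 1 / (n + 1 : ℕ) := fun j hj => by
      have hj := (mem_Icc.mp hj).2
      rw [max_eq_right hj, max_eq_left hj]
      exact ⟨rfl, rfl⟩
    simp_rw [sum_Icc_succ_top (Nat.le_add_left 1 n), sum_add_distrib]
    rw [sum_congr rfl fun j hj => (h_new j (Icc_subset_Icc_right n.le_succ hj)).1,
      sum_congr rfl fun j hj => (h_new j (Icc_subset_Icc_right n.le_succ hj)).2,
      (h_new (n + 1) (right_mem_Icc.mpr (Nat.le_add_left 1 n))).1, sum_const, Nat.card_Icc,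
      nsmul_eq_mul, Nat.add_sub_cancel]
    have h_new_entries : 2 * ((n : ℝ) * (1 / (n + 1))) + 1 / (n + 1) ≤ 2 := by
      rw [mul_one_div, ← mul_div_assoc, ← add_div, div_le_iff₀ (by positivity)]
      linarith
    push_cast at ih ⊢
    linarith

lemma sum_mul_sum_Icc_sq (κ : ℕ) (w a : ℕ → ℝ) :
    ∑ i ∈ Icc 1 κ, w i * (∑ j ∈ Icc i κ, a j) ^ 2
      = ∑ j ∈ Icc 1 κ, ∑ k ∈ Icc 1 κ, (∑ i ∈ Icc 1 (min j k), w i) * (a j * a k) := by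
  simp_rw [sq, sum_mul_sum, ← sum_product', mul_sum, sum_mul]
  rw [sum_comm' (t' := Icc 1 κ ×ˢ Icc 1 κ) (s' := fun p => Icc 1 (min p.1 p.2)), sum_product]
  intro i p
  simp only [mem_Icc, mem_product, le_min_iff]
  omega

lemma apply_min_mul_inv_mul_inv {α K : Type*} [LinearOrder α] [Field K] (f : α → K) {j k : α}
    (hj : f j ≠ 0) (hk : f k ≠ 0) :
    f (min j k) * (1 / f j * (1 / f k)) = 1 / f (max j k) := by
  rcases le_total j k with h | h
  · rw [min_eq_left h, max_eq_right h]
    field_simp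
  · rw [min_eq_right h, max_eq_left h]
    field_simp

lemma sum_mul_sum_Icc_inv_sq_le (κ : ℕ) (t : ℕ → ℕ) (hti : ∀ i ∈ Icc 1 κ, i ≤ t i)
    (w : ℕ → ℝ) (hw : ∀ m ∈ Icc 1 κ, ∑ i ∈ Icc 1 m, w i ≤ t m) :
    ∑ i ∈ Icc 1 κ, w i * (∑ j ∈ Icc i κ, 1 / (t j : ℝ)) ^ 2 ≤ 2 * κ := by
  rw [sum_mul_sum_Icc_sq]
  refine le_trans (sum_le_sum fun j hj => sum_le_sum fun k hk => ?_)
    (sum_Icc_one_sum_Icc_one_inv_max_le κ)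
  have h_index (i : ℕ) (hi : i ∈ Icc 1 κ) : (0 : ℝ) < i ∧ (i : ℝ) ≤ t i :=
    ⟨by exact_mod_cast (mem_Icc.mp hi).1, by exact_mod_cast hti i hi⟩
  have h_max : max j k ∈ Icc 1 κ := by rcases max_choice j k with h | h <;> rw [h] <;> assumption
  have h_min : min j k ∈ Icc 1 κ := by rcases min_choice j k with h | h <;> rw [h] <;> assumption
  have h_pos (i : ℕ) (hi : i ∈ Icc 1 κ) : (t i : ℝ) ≠ 0 :=
    ((h_index i hi).1.trans_le (h_index i hi).2).ne'
  calc (∑ i ∈ Icc 1 (min j k), w i) * (1 / (t j : ℝ) * (1 / t k))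
      ≤ (t (min j k) : ℝ) * (1 / (t j : ℝ) * (1 / t k)) := by
        gcongr
        exact hw _ h_min
    _ = 1 / (t (max j k) : ℝ) :=
        apply_min_mul_inv_mul_inv (fun i => (t i : ℝ)) (h_pos j hj) (h_pos k hk)
    _ ≤ 1 / (max j k : ℕ) := one_div_le_one_div_of_le (h_index _ h_max).1 (h_index _ h_max).2

theorem mean_of_means_variance_bound_general
    (κ : ℕ) (t : ℕ → ℕ)
    (hti : ∀ i ∈ Icc 1 κ, i ≤ t i)
    (σb2 σDP2 : ℝ) (hσb : 0 ≤ σb2) (hσDP : 0 ≤ σDP2) :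
    σb2 / (κ : ℝ) ^ 2 * ∑ i ∈ Icc 1 κ,
        ((t i : ℝ) - (t (i - 1) : ℝ)) * (∑ j ∈ Icc i κ, 1 / (t j : ℝ)) ^ 2
      + σDP2 / (κ : ℝ) ^ 2 * ∑ i ∈ Icc 1 κ, (∑ j ∈ Icc i κ, 1 / (t j : ℝ)) ^ 2
      ≤ 2 * (σb2 + σDP2) / κ := by
  have h_data := sum_mul_sum_Icc_inv_sq_le κ t hti (fun i => (t i : ℝ) - t (i - 1))
    fun m _ => by
      rw [sum_Icc_one_sub_pred (fun i => (t i : ℝ))]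
      linarith [(t 0).cast_nonneg (α := ℝ)]
  have h_noise := sum_mul_sum_Icc_inv_sq_le κ t hti 1 fun m hm => by
    simpa using (Nat.cast_le (α := ℝ)).mpr (hti m hm)
  simp only [Pi.one_apply, one_mul] at h_noise
  calc _ ≤ σb2 / (κ : ℝ) ^ 2 * (2 * κ) + σDP2 / (κ : ℝ) ^ 2 * (2 * κ) := by gcongr
    _ = 2 * (σb2 + σDP2) * ((κ : ℝ) / (κ * κ)) := by ring
    _ = 2 * (σb2 + σDP2) / κ := by rw [div_self_mul_self', div_eq_mul_inv]

/-- The variance of the mean-of-means statistic under PM-I is `O(1/κ)`. -/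
theorem mean_of_means_variance_bound
    (κ : ℕ) (hκ : 1 ≤ κ) (t : ℕ → ℕ) (ht0 : t 0 = 0)
    (hmono : ∀ i, 1 ≤ i → i < κ → t i < t (i + 1))
    (hti : ∀ i ∈ Icc 1 κ, i ≤ t i)
    (σb2 σDP2 : ℝ) (hσb : 0 ≤ σb2) (hσDP : 0 ≤ σDP2) :
    σb2 / (κ : ℝ) ^ 2 * ∑ i ∈ Icc 1 κ,
        ((t i : ℝ) - (t (i - 1) : ℝ)) * (∑ j ∈ Icc i κ, 1 / (t j : ℝ)) ^ 2
      + σDP2 / (κ : ℝ) ^ 2 * ∑ i ∈ Icc 1 κ, (∑ j ∈ Icc i κ, 1 / (t j : ℝ)) ^ 2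
      ≤ 2 * (σb2 + σDP2) / κ :=
  mean_of_means_variance_bound_general κ t hti σb2 σDP2 hσb hσDP
end

section
/- Let n ≥ 1 and let X_1,…,X_n be mutually independent real random variables such that each X_i has finite moments of all orders, mean μ_i, variance σ_i², and satisfies Bernstein's condition with parameter β_i > 0, i.e., |E[(X_i − μ_i)^k]| ≤ (1/2)·k!·σ_i²·β_i^{k−2} for every integer k ≥ 2. Let δ_1,…,δ_n ∈ ℝ and set X = δ_1 X_1 + ⋯ + δ_n X_n, μ = δ_1 μ_1 + ⋯ + δ_n μ_n, σ² = δ_1² σ_1² + ⋯ + δ_n² σ_n², and β = √n · max{ |δ_1|β_1, …, |δ_n|β_n, |δ_1|σ_1, …, |δ_n|σ_n }. Then E[X] = μ, Var(X) = σ², and X satisfies Bernstein's condition with parameter β: |E[(X − μ)^k]| ≤ (1/2)·k!·σ²·β^{k−2} for every integer k ≥ 2. -/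
open MeasureTheory ProbabilityTheory Finset

/-!
Write `Y i = δ i * (X i - μ i)`. Each `Y i` is centred and satisfies Bernstein's condition with
variance `δ i ^ 2 * σ i ^ 2` and the common scale `M = maxᵢ max (|δ i| * β i) (|δ i| * σ i)`, and
moreover `δ i ^ 2 * σ i ^ 2 ≤ M ^ 2`. Add the `Y i` one at a time. By independence the binomial
expansion of `E[(A + Z)^k]` factorises into products of moments; the terms with a first moment
vanish, and each mixed term is bounded by the product of the two Bernstein bounds. When the scale
of the partial sum grows from `√N * M` to `√(N + 1) * M`, Bernoulli's inequality
`x ^ m + (m - 1) / 2 * x ^ (m - 2) ≤ (x ^ 2 + 1) ^ (m / 2)` for `x = √N ≥ 1` absorbs the mixed terms.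
-/

theorem pow_add_mul_pow_le_sqrt_sq_add_one_pow {x : ℝ} (hx : 0 ≤ x) (m : ℕ) :
    x ^ m + ((m - 1 : ℕ) : ℝ) / 2 * x ^ (m - 2) ≤ √(x ^ 2 + 1) ^ m := by
  set y := √(x ^ 2 + 1)
  have hxy : x ≤ y := Real.le_sqrt_of_sq_le (by linarith)
  have hy2 : y ^ 2 = x ^ 2 + 1 := Real.sq_sqrt (by positivity)
  obtain ⟨q, rfl | rfl⟩ := Nat.even_or_odd' m
  · rcases Nat.eq_zero_or_pos q with rfl | hq
    · simp
    have bernoulli := pow_add_mul_le_add_pow (a := x ^ 2) (b := 1) (by positivity) (by positivity) q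
    have hcoef : ((2 * q - 1 : ℕ) : ℝ) / 2 ≤ q := by
      rw [div_le_iff₀ two_pos]
      exact_mod_cast (by omega : 2 * q - 1 ≤ q * 2)
    calc x ^ (2 * q) + ((2 * q - 1 : ℕ) : ℝ) / 2 * x ^ (2 * q - 2)
        ≤ (x ^ 2) ^ q + q * (x ^ 2) ^ (q - 1) * 1 := by
          rw [← pow_mul, ← pow_mul, mul_one, show 2 * (q - 1) = 2 * q - 2 by omega]
          gcongr
      _ ≤ (x ^ 2 + 1) ^ q := bernoulli
      _ = y ^ (2 * q) := by rw [pow_mul, hy2]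
  · rcases Nat.eq_zero_or_pos q with rfl | hq
    · simpa using hxy
    have bernoulli := pow_add_mul_le_add_pow (a := x ^ 2) (b := 1) (by positivity) (by positivity) q
    calc x ^ (2 * q + 1) + ((2 * q + 1 - 1 : ℕ) : ℝ) / 2 * x ^ (2 * q + 1 - 2)
        = ((x ^ 2) ^ q + q * (x ^ 2) ^ (q - 1) * 1) * x := by
          rw [← pow_mul, ← pow_mul, show 2 * q + 1 - 2 = 2 * (q - 1) + 1 by omega,
            show 2 * q + 1 - 1 = 2 * q by omega]
          push_cast
          ring
      _ ≤ (x ^ 2 + 1) ^ q * y := by gcongr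
      _ = y ^ (2 * q + 1) := by rw [pow_succ y, pow_mul, hy2]

section

variable {Ω : Type*} [MeasurableSpace Ω] {P : Measure Ω}

/-- Bernstein's condition with variance `v` and scale `b`, on raw moments: it is meant for
centred variables. -/
def BernsteinCondition (Y : Ω → ℝ) (P : Measure Ω) (v b : ℝ) : Prop :=
  ∀ k : ℕ, 2 ≤ k → |∫ ω, Y ω ^ k ∂P| ≤ 1 / 2 * k.factorial * v * b ^ (k - 2)

theorem integrable_pow_of_forall_memLp [IsFiniteMeasure P] {Y : Ω → ℝ}
    (hY : ∀ p : ℕ, MemLp Y p P) (k : ℕ) : Integrable (fun ω => Y ω ^ k) P :=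
  (hY k).integrable_norm_pow'.mono' ((hY 1).aestronglyMeasurable.pow k)
    (.of_forall fun ω => by simp [norm_pow])

theorem integral_add_pow_of_indepFun [IsFiniteMeasure P] {A Z : Ω → ℝ} (hAZ : IndepFun A Z P)
    (hA : ∀ p : ℕ, MemLp A p P) (hZ : ∀ p : ℕ, MemLp Z p P) (k : ℕ) :
    ∫ ω, (A ω + Z ω) ^ k ∂P =
      ∑ j ∈ range (k + 1), (∫ ω, A ω ^ j ∂P) * (∫ ω, Z ω ^ (k - j) ∂P) * k.choose j := by
  have hpow (j : ℕ) : IndepFun (fun ω => A ω ^ j) (fun ω => Z ω ^ (k - j)) P :=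
    hAZ.comp (measurable_id.pow_const j) (measurable_id.pow_const (k - j))
  have hA' := integrable_pow_of_forall_memLp hA
  have hZ' := integrable_pow_of_forall_memLp hZ
  simp_rw [add_pow]
  refine (integral_finsetSum _ fun j _ => ?_).trans (sum_congr rfl fun j _ => ?_)
  · exact ((hpow j).integrable_mul (hA' j) (hZ' _)).mul_const _
  · rw [integral_mul_const, (hpow j).integral_fun_mul_eq_mul_integral (hA' j).1 (hZ' _).1]

theorem ProbabilityTheory.iIndepFun.variance_sum_const_mul {ι : Type*} {X : ι → Ω → ℝ} (hindep : iIndepFun X P)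
    (hX : ∀ i, MemLp (X i) 2 P) (δ : ι → ℝ) (s : Finset ι) :
    variance (fun ω => ∑ i ∈ s, δ i * X i ω) P = ∑ i ∈ s, δ i ^ 2 * variance (X i) P := by
  have hpair : Set.Pairwise s
      fun i j => IndepFun (fun ω => δ i * X i ω) (fun ω => δ j * X j ω) P := fun i _ j _ hij =>
    (hindep.indepFun hij).comp (measurable_const_mul (δ i)) (measurable_const_mul (δ j))
  rw [show (fun ω => ∑ i ∈ s, δ i * X i ω) = ∑ i ∈ s, fun ω => δ i * X i ω by ext; simp,
    IndepFun.variance_sum (fun i _ => (hX i).const_mul (δ i)) hpair]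
  simp_rw [variance_const_mul]

namespace BernsteinCondition

theorem nonneg {Y : Ω → ℝ} {v b : ℝ} (h : BernsteinCondition Y P v b) : 0 ≤ v := by
  simpa using (abs_nonneg _).trans (h 2 le_rfl)

theorem mono {Y : Ω → ℝ} {v b b' : ℝ} (h : BernsteinCondition Y P v b) (hb : 0 ≤ b)
    (hbb' : b ≤ b') : BernsteinCondition Y P v b' := fun k hk =>
  (h k hk).trans (by have := h.nonneg; gcongr)

theorem const_mul {Y : Ω → ℝ} {v b : ℝ} (h : BernsteinCondition Y P v b) (a : ℝ) :
    BernsteinCondition (fun ω => a * Y ω) P (a ^ 2 * v) (|a| * b) := by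
  intro k hk
  have hpow : |a| ^ k = a ^ 2 * |a| ^ (k - 2) := by
    rw [← sq_abs, ← pow_add]
    congr 1
    omega
  simp_rw [mul_pow, integral_const_mul, abs_mul, abs_pow, hpow]
  calc a ^ 2 * |a| ^ (k - 2) * |∫ ω, Y ω ^ k ∂P|
      ≤ a ^ 2 * |a| ^ (k - 2) * (1 / 2 * k.factorial * v * b ^ (k - 2)) := by
        gcongr
        exact h k hk
    _ = 1 / 2 * k.factorial * (a ^ 2 * v) * (|a| ^ (k - 2) * b ^ (k - 2)) := by ring

variable {A Z : Ω → ℝ} {C c x M : ℝ}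

theorem choose_mul_abs_mul_abs_le (hbA : BernsteinCondition A P C (x * M))
    (hbZ : BernsteinCondition Z P c M) (hc : c ≤ M ^ 2) (hx : 1 ≤ x) (hM : 0 ≤ M) {m j : ℕ}
    (hj : j ∈ Ico 2 (m + 1)) :
    (m + 2).choose j * |∫ ω, A ω ^ j ∂P| * |∫ ω, Z ω ^ (m + 2 - j) ∂P|
      ≤ 1 / 4 * (m + 2).factorial * C * x ^ (m - 2) * M ^ m := by
  rw [mem_Ico] at hj
  have hC := hbA.nonneg
  have hc0 := hbZ.nonneg
  have hfact : ((m + 2).choose j : ℝ) * j.factorial * (m + 2 - j).factorial =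
      (m + 2).factorial := by
    exact_mod_cast Nat.choose_mul_factorial_mul_factorial (by omega)
  have hMpow : M ^ m = M ^ 2 * (M ^ (j - 2) * M ^ (m + 2 - j - 2)) := by
    rw [← pow_add, ← pow_add]
    congr 1
    omega
  have hxpow : x ^ (j - 2) ≤ x ^ (m - 2) := pow_le_pow_right₀ hx (by omega)
  calc (m + 2).choose j * |∫ ω, A ω ^ j ∂P| * |∫ ω, Z ω ^ (m + 2 - j) ∂P|
      ≤ (m + 2).choose j * (1 / 2 * j.factorial * C * (x * M) ^ (j - 2)) *
          (1 / 2 * (m + 2 - j).factorial * c * M ^ (m + 2 - j - 2)) := by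
        gcongr
        · exact hbA j hj.1
        · exact hbZ _ (by omega)
    _ = 1 / 4 * ((m + 2).choose j * j.factorial * (m + 2 - j).factorial) * C * x ^ (j - 2) *
          (c * (M ^ (j - 2) * M ^ (m + 2 - j - 2))) := by ring
    _ ≤ 1 / 4 * (m + 2).factorial * C * x ^ (m - 2) *
          (M ^ 2 * (M ^ (j - 2) * M ^ (m + 2 - j - 2))) := by
        rw [hfact]
        gcongr
    _ = 1 / 4 * (m + 2).factorial * C * x ^ (m - 2) * M ^ m := by rw [hMpow]

theorem add [IsProbabilityMeasure P] (hAZ : IndepFun A Z P) (hA : ∀ p : ℕ, MemLp A p P)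
    (hZ : ∀ p : ℕ, MemLp Z p P) (hA0 : ∫ ω, A ω ∂P = 0) (hZ0 : ∫ ω, Z ω ∂P = 0)
    (hbA : BernsteinCondition A P C (x * M)) (hbZ : BernsteinCondition Z P c M)
    (hc : c ≤ M ^ 2) (hx : 1 ≤ x) (hM : 0 ≤ M) :
    BernsteinCondition (A + Z) P (C + c) (√(x ^ 2 + 1) * M) := by
  intro k hk
  obtain ⟨m, rfl⟩ := Nat.exists_eq_add_of_le' hk
  set t : ℕ → ℝ := fun j =>
    (m + 2).choose j * |∫ ω, A ω ^ j ∂P| * |∫ ω, Z ω ^ (m + 2 - j) ∂P| with ht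
  have hcross : ∑ j ∈ Ico 1 (m + 2), t j = ∑ j ∈ Ico 2 (m + 1), t j := by
    refine (sum_subset (fun j hj => ?_) fun j hj hj' => ?_).symm
    · simp only [mem_Ico] at hj ⊢
      omega
    · simp only [mem_Ico] at hj hj'
      obtain rfl | rfl : j = 1 ∨ j = m + 1 := by omega
      · simp [ht, hA0]
      · simp [ht, hZ0, show m + 2 - (m + 1) = 1 by omega]
  have hsplit : ∑ j ∈ range (m + 3), t j = t (m + 2) + t 0 + ∑ j ∈ Ico 2 (m + 1), t j := by
    rw [range_eq_Ico, sum_Ico_succ_top (by omega), sum_eq_sum_Ico_succ_bot (by omega), hcross]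
    ring
  have hC := hbA.nonneg
  have hc0 := hbZ.nonneg
  have hgrowth := pow_add_mul_pow_le_sqrt_sq_add_one_pow (by linarith : 0 ≤ x) m
  set y := √(x ^ 2 + 1)
  have hy : 1 ≤ y := Real.one_le_sqrt.mpr (by nlinarith)
  simp only [Pi.add_apply, Nat.add_sub_cancel]
  calc |∫ ω, (A ω + Z ω) ^ (m + 2) ∂P|
      ≤ ∑ j ∈ range (m + 3), t j := by
        rw [integral_add_pow_of_indepFun hAZ hA hZ]
        refine (abs_sum_le_sum_abs _ _).trans_eq (sum_congr rfl fun j _ => ?_)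
        rw [abs_mul, abs_mul, Nat.abs_cast]
        ring
    _ ≤ 1 / 2 * (m + 2).factorial * C * (x * M) ^ m + 1 / 2 * (m + 2).factorial * c * M ^ m +
          (m - 1 : ℕ) * (1 / 4 * (m + 2).factorial * C * x ^ (m - 2) * M ^ m) := by
        rw [hsplit]
        gcongr
        · simpa [ht] using hbA (m + 2) hk
        · simpa [ht] using hbZ (m + 2) hk
        · refine (sum_le_card_nsmul _ _ _ fun j hj =>
            hbA.choose_mul_abs_mul_abs_le hbZ hc hx hM hj).trans_eq ?_
          simp [nsmul_eq_mul]
    _ = 1 / 2 * (m + 2).factorial * M ^ m *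
          (C * (x ^ m + ((m - 1 : ℕ) : ℝ) / 2 * x ^ (m - 2)) + c) := by ring
    _ ≤ 1 / 2 * (m + 2).factorial * M ^ m * (C * y ^ m + c * y ^ m) := by
        gcongr
        exact le_mul_of_one_le_right hc0 (one_le_pow₀ hy)
    _ = 1 / 2 * (m + 2).factorial * (C + c) * (y * M) ^ m := by ring

theorem sum [IsProbabilityMeasure P] {ι : Type*} {Y : ι → Ω → ℝ} {c : ι → ℝ}
    (hindep : iIndepFun Y P) (hY : ∀ i, ∀ p : ℕ, MemLp (Y i) p P)
    (hY0 : ∀ i, ∫ ω, Y i ω ∂P = 0) (hbY : ∀ i, BernsteinCondition (Y i) P (c i) M)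
    (hc : ∀ i, c i ≤ M ^ 2) (hM : 0 ≤ M) {s : Finset ι} (hs : s.Nonempty) :
    BernsteinCondition (∑ i ∈ s, Y i) P (∑ i ∈ s, c i) (√(#s : ℝ) * M) := by
  induction hs using Nonempty.cons_induction with
  | singleton a => simpa using hbY a
  | cons a s ha hs ih =>
    have hmem (p : ℕ) : MemLp (∑ i ∈ s, Y i) p P := memLp_finsetSum' s fun i _ => hY i p
    have hmean : ∫ ω, (∑ i ∈ s, Y i) ω ∂P = 0 := by
      simp only [Finset.sum_apply]
      rw [integral_finsetSum s fun i _ => memLp_one_iff_integrable.mp (mod_cast hY i 1)]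
      exact sum_eq_zero fun i _ => hY0 i
    have hcard : √(#s : ℝ) ^ 2 + 1 = #(s.cons a ha) := by
      rw [card_cons, Real.sq_sqrt (by positivity)]
      push_cast
      rfl
    have hx : 1 ≤ √(#s : ℝ) := Real.one_le_sqrt.mpr (by exact_mod_cast hs.card_pos)
    rw [sum_cons, sum_cons, add_comm (Y a), add_comm (c a), ← hcard]
    exact ih.add (hindep.indepFun_finsetSum_of_notMem₀ (fun i => (hY i 1).aemeasurable) ha)
      hmem (hY a) hmean (hY0 a) (hbY a) (hc a) hx hM

end BernsteinCondition

end

/-- A linear combination of independent random variables satisfying Bernstein's condition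
satisfies Bernstein's condition with parameter
`β = √n · max{|δ_i|β_i, |δ_i|σ_i}`. -/
theorem bernstein_condition_linear_combination
    (Ω : Type*) [MeasurableSpace Ω] (P : Measure Ω) [IsProbabilityMeasure P]
    (n : ℕ) (hn : 1 ≤ n)
    (X : Fin n → Ω → ℝ) (μ σ β : Fin n → ℝ)
    (hβpos : ∀ i, 0 < β i) (hσnn : ∀ i, 0 ≤ σ i)
    (hindep : iIndepFun X P)
    (hmom : ∀ i, ∀ p : ℕ, MemLp (X i) p P)
    (hmean : ∀ i, ∫ ω, X i ω ∂P = μ i)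
    (hvar : ∀ i, variance (X i) P = (σ i) ^ 2)
    (hbern : ∀ i, ∀ k : ℕ, 2 ≤ k →
      |∫ ω, (X i ω - μ i) ^ k ∂P|
        ≤ (1 / 2) * (k.factorial : ℝ) * (σ i) ^ 2 * (β i) ^ (k - 2))
    (δ : Fin n → ℝ) :
    (∫ ω, (∑ i, δ i * X i ω) ∂P = ∑ i, δ i * μ i) ∧
    (variance (fun ω => ∑ i, δ i * X i ω) P = ∑ i, (δ i) ^ 2 * (σ i) ^ 2) ∧
    (∀ k : ℕ, 2 ≤ k →
      |∫ ω, ((∑ i, δ i * X i ω) - ∑ i, δ i * μ i) ^ k ∂P|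
        ≤ (1 / 2) * (k.factorial : ℝ) * (∑ i, (δ i) ^ 2 * (σ i) ^ 2) *
            (Real.sqrt n *
              Finset.univ.sup'
                (@Finset.univ_nonempty (Fin n) _ (Fin.pos_iff_nonempty.mp (by omega)))
                (fun i => max (|δ i| * β i) (|δ i| * σ i))) ^ (k - 2)) := by
  have hint (i : Fin n) : Integrable (X i) P := memLp_one_iff_integrable.mp (mod_cast hmom i 1)
  refine ⟨?_, ?_, fun k hk => ?_⟩
  · rw [integral_finsetSum _ fun i _ => (hint i).const_mul (δ i)]
    simp_rw [integral_const_mul, hmean]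
  · simp_rw [hindep.variance_sum_const_mul (fun i => hmom i 2) δ univ, hvar]
  have : Nonempty (Fin n) := ⟨⟨0, hn⟩⟩
  set M := univ.sup' _ fun i => max (|δ i| * β i) (|δ i| * σ i)
  have hM (i : Fin n) : max (|δ i| * β i) (|δ i| * σ i) ≤ M :=
    le_sup' (fun i => max (|δ i| * β i) (|δ i| * σ i)) (mem_univ i)
  have hM0 : 0 ≤ M :=
    (mul_nonneg (abs_nonneg _) (hβpos ⟨0, hn⟩).le).trans ((le_max_left _ _).trans (hM ⟨0, hn⟩))
  set Y : Fin n → Ω → ℝ := fun i ω => δ i * (X i ω - μ i)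
  have hbY (i : Fin n) : BernsteinCondition (Y i) P (δ i ^ 2 * σ i ^ 2) M :=
    (BernsteinCondition.const_mul (hbern i) (δ i)).mono (by have := hβpos i; positivity)
      ((le_max_left _ _).trans (hM i))
  have hc (i : Fin n) : δ i ^ 2 * σ i ^ 2 ≤ M ^ 2 := by
    rw [← mul_pow, ← sq_abs, abs_mul, abs_of_nonneg (hσnn i)]
    exact pow_le_pow_left₀ (by have := hσnn i; positivity) ((le_max_right _ _).trans (hM i)) 2
  have hY0 (i : Fin n) : ∫ ω, Y i ω ∂P = 0 := by
    simp [Y, integral_const_mul, integral_sub (hint i) (integrable_const _), hmean]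
  have hYmom (i : Fin n) (p : ℕ) : MemLp (Y i) p P :=
    ((hmom i p).sub (memLp_const _)).const_mul _
  have hindepY : iIndepFun Y P := hindep.comp (fun i x => δ i * (x - μ i)) fun i => by fun_prop
  convert BernsteinCondition.sum hindepY hYmom hY0 hbY hc hM0 univ_nonempty k hk using 3
  · simp [Y, ← sum_sub_distrib, mul_sub]
  · simp
end

section
/- Let α > 1, A > 0, and c > 0 be real numbers. Then the integrals ∫_0^∞ (x+c)^{−α−1} e^{−A/(x+c)} dx and ∫_0^∞ x·(x+c)^{−α−1} e^{−A/(x+c)} dx are finite, the former is strictly positive, and ( ∫_0^∞ x·(x+c)^{−α−1} e^{−A/(x+c)} dx ) / ( ∫_0^∞ (x+c)^{−α−1} e^{−A/(x+c)} dx ) = A · ( ∫_0^{A/c} t^{α−2} e^{−t} dt ) / ( ∫_0^{A/c} t^{α−1} e^{−t} dt ) − c. -/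
/-!
The substitution `t = A / (x + c)` maps `(0, ∞)` onto `(0, A / c)` with `dt = A / (x + c)² dx`,
and turns `∫₀^{A/c} t^(-q-2) e^(-t) dt` into `A^(-q-1) ∫₀^∞ (x + c)^q e^(-A/(x+c)) dx`; for
`q < -1` it also transfers integrability from the incomplete gamma integrand. With `q = -α - 1`
and `q = -α` this expresses the denominator `D` and the integral `K` of `(x + c)^(-α) e^(-A/(x+c))`
through `γ(α, A/c)` and `γ(α - 1, A/c)`; since `x = (x + c) - c`, the numerator is `K - c D`.
-/

open MeasureTheory Set Real

theorem setIntegral_pos_of_forall_pos {X : Type*} [MeasurableSpace X] {μ : Measure X}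
    {s : Set X} {f : X → ℝ} (hs : MeasurableSet s) (hμ : μ s ≠ 0) (hf : IntegrableOn f s μ)
    (hpos : ∀ x ∈ s, 0 < f x) : 0 < ∫ x in s, f x ∂μ := by
  have hsupp : s ⊆ Function.support f := fun x hx => (hpos x hx).ne'
  rw [setIntegral_pos_iff_support_of_nonneg_ae ((ae_restrict_iff' hs).2 <|
    ae_of_all _ fun x hx => (hpos x hx).le) hf, inter_eq_self_of_subset_right hsupp]
  exact pos_iff_ne_zero.2 hμ

theorem integrableOn_Ioo_rpow_mul_exp_neg {p : ℝ} (hp : -1 < p) (b : ℝ) :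
    IntegrableOn (fun t => t ^ p * exp (-t)) (Ioo 0 b) := by
  have h := (GammaIntegral_convergent (s := p + 1) (by linarith)).mono_set
    (Ioo_subset_Ioi_self : Ioo (0 : ℝ) b ⊆ Ioi 0)
  simpa only [add_sub_cancel_right, mul_comm (exp _)] using h

theorem mul_add_rpow_eq {x c : ℝ} (hxc : x + c ≠ 0) (r : ℝ) :
    x * (x + c) ^ r = (x + c) ^ (r + 1) - c * (x + c) ^ r := by
  rw [rpow_add_one hxc]
  ring

theorem hasDerivAt_div_add (A : ℝ) {c x : ℝ} (hx : x + c ≠ 0) :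
    HasDerivAt (fun x => A / (x + c)) (-(A / (x + c) ^ 2)) x := by
  have h : HasDerivAt (fun x => A / (x + c)) ((0 * (x + c) - A * 1) / (x + c) ^ 2) x :=
    (hasDerivAt_const x A).div ((hasDerivAt_id x).add_const c) hx
  convert h using 1
  ring

theorem div_sq_mul_rpow_mul_exp_neg_div {A u : ℝ} (hA : 0 < A) (hu : 0 < u) (q : ℝ) :
    A / u ^ 2 * ((A / u) ^ (-q - 2) * exp (-(A / u))) = A ^ (-q - 1) * (u ^ q * exp (-A / u)) := by
  rw [div_rpow hA.le hu.le, show -q - 2 = (-q - 1) - 1 by ring, rpow_sub_one hA.ne',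
    rpow_sub_one hu.ne', rpow_sub hu, rpow_neg hu.le, rpow_one, neg_div]
  field_simp

section InverseShift

variable {A c : ℝ}

theorem image_div_add_Ioi_zero (hA : 0 < A) (hc : 0 < c) :
    (fun x : ℝ => A / (x + c)) '' Ioi 0 = Ioo 0 (A / c) := by
  have hcomp : (fun x : ℝ => A / (x + c)) = (A * ·) ∘ (·⁻¹) ∘ (· + c) := by
    funext x
    simp [div_eq_mul_inv]
  rw [hcomp, image_comp, image_comp, image_add_const_Ioi, image_inv_eq_inv, zero_add,
    inv_Ioi₀ hc, image_mul_left_Ioo hA, mul_zero, div_eq_mul_inv]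

theorem strictAntiOn_div_add (hA : 0 < A) (hc : 0 ≤ c) :
    StrictAntiOn (fun x => A / (x + c)) (Ioi 0) := fun x hx _ _ hxy =>
  div_lt_div_of_pos_left hA (add_pos_of_pos_of_nonneg hx hc) (by linarith)

variable {E : Type*} [NormedAddCommGroup E] [NormedSpace ℝ E]

theorem integrableOn_Ioo_iff_integrableOn_Ioi_div_add (hA : 0 < A) (hc : 0 < c) (g : ℝ → E) :
    IntegrableOn g (Ioo 0 (A / c)) ↔
      IntegrableOn (fun x => (A / (x + c) ^ 2) • g (A / (x + c))) (Ioi 0) := by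
  rw [← image_div_add_Ioi_zero hA hc, integrableOn_image_iff_integrableOn_abs_deriv_smul
    measurableSet_Ioi (fun x hx => (hasDerivAt_div_add A (add_pos hx hc).ne').hasDerivWithinAt)
    (strictAntiOn_div_add hA hc.le).injOn]
  refine integrableOn_congr_fun (fun x hx => ?_) measurableSet_Ioi
  have hxc : 0 < x + c := add_pos hx hc
  rw [abs_neg, abs_of_pos (by positivity)]

theorem integral_Ioo_eq_integral_Ioi_div_add (hA : 0 < A) (hc : 0 < c) (g : ℝ → E) :
    ∫ t in Ioo 0 (A / c), g t = ∫ x in Ioi 0, (A / (x + c) ^ 2) • g (A / (x + c)) := by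
  rw [← image_div_add_Ioi_zero hA hc, integral_image_eq_integral_abs_deriv_smul
    measurableSet_Ioi (fun x hx => (hasDerivAt_div_add A (add_pos hx hc).ne').hasDerivWithinAt)
    (strictAntiOn_div_add hA hc.le).injOn]
  refine setIntegral_congr_fun measurableSet_Ioi (fun x hx => ?_)
  have hxc : 0 < x + c := add_pos hx hc
  rw [abs_neg, abs_of_pos (by positivity)]

theorem integrableOn_Ioi_add_rpow_mul_exp (hA : 0 < A) (hc : 0 < c) {q : ℝ} (hq : q < -1) :
    IntegrableOn (fun x => (x + c) ^ q * exp (-A / (x + c))) (Ioi 0) := by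
  have h := (integrableOn_Ioo_iff_integrableOn_Ioi_div_add hA hc _).1
    (integrableOn_Ioo_rpow_mul_exp_neg (p := -q - 2) (by linarith) (A / c))
  have h' := h.congr_fun (fun x hx => div_sq_mul_rpow_mul_exp_neg_div hA (add_pos hx hc) q)
    measurableSet_Ioi
  exact (integrable_const_mul_iff (rpow_pos_of_pos hA _).ne'.isUnit _).1 h'

theorem intervalIntegral_rpow_mul_exp_neg_eq (hA : 0 < A) (hc : 0 < c) (q : ℝ) :
    ∫ t in 0..A / c, t ^ (-q - 2) * exp (-t) =
      A ^ (-q - 1) * ∫ x in Ioi 0, (x + c) ^ q * exp (-A / (x + c)) := by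
  rw [intervalIntegral.integral_of_le (div_pos hA hc).le, integral_Ioc_eq_integral_Ioo,
    integral_Ioo_eq_integral_Ioi_div_add hA hc, ← integral_const_mul]
  exact setIntegral_congr_fun measurableSet_Ioi fun x hx =>
    div_sq_mul_rpow_mul_exp_neg_div hA (add_pos hx hc) q

end InverseShift

/-- Posterior expectation of the truncated inverse gamma distribution, expressed via
lower incomplete gamma functions. -/
theorem truncated_inverse_gamma_posterior_mean
    (α A c : ℝ) (hα : 1 < α) (hA : 0 < A) (hc : 0 < c) :
    IntegrableOn (fun x => (x + c) ^ (-α - 1) * Real.exp (-A / (x + c))) (Ioi 0) ∧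
    IntegrableOn (fun x => x * (x + c) ^ (-α - 1) * Real.exp (-A / (x + c))) (Ioi 0) ∧
    (0 < ∫ x in Ioi (0 : ℝ), (x + c) ^ (-α - 1) * Real.exp (-A / (x + c))) ∧
    (∫ x in Ioi (0 : ℝ), x * (x + c) ^ (-α - 1) * Real.exp (-A / (x + c))) /
        (∫ x in Ioi (0 : ℝ), (x + c) ^ (-α - 1) * Real.exp (-A / (x + c)))
      = A * (∫ s in (0 : ℝ)..(A / c), s ^ (α - 2) * Real.exp (-s)) /
          (∫ s in (0 : ℝ)..(A / c), s ^ (α - 1) * Real.exp (-s)) - c := by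
  have hD_int := integrableOn_Ioi_add_rpow_mul_exp hA hc (q := -α - 1) (by linarith)
  have hK_int := integrableOn_Ioi_add_rpow_mul_exp hA hc (q := -α) (by linarith)
  have hsplit : EqOn
      (fun x => (x + c) ^ (-α) * exp (-A / (x + c)) - c * ((x + c) ^ (-α - 1) * exp (-A / (x + c))))
      (fun x => x * (x + c) ^ (-α - 1) * exp (-A / (x + c))) (Ioi 0) := fun x hx => by
    dsimp only
    rw [mul_add_rpow_eq (add_pos hx hc).ne', sub_add_cancel]
    ring
  have hN_int := (hK_int.sub (hD_int.const_mul c)).congr_fun hsplit measurableSet_Ioi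
  have hN : ∫ x in Ioi 0, x * (x + c) ^ (-α - 1) * exp (-A / (x + c)) =
      (∫ x in Ioi 0, (x + c) ^ (-α) * exp (-A / (x + c))) -
        c * ∫ x in Ioi 0, (x + c) ^ (-α - 1) * exp (-A / (x + c)) := by
    rw [← setIntegral_congr_fun measurableSet_Ioi hsplit, integral_sub hK_int (hD_int.const_mul c),
      integral_const_mul]
  have hD_pos := setIntegral_pos_of_forall_pos measurableSet_Ioi (by simp) hD_int
    fun x hx => by have := add_pos hx hc; positivity
  have hγα := intervalIntegral_rpow_mul_exp_neg_eq hA hc (-α - 1)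
  have hγα₁ := intervalIntegral_rpow_mul_exp_neg_eq hA hc (-α)
  rw [show -(-α - 1) - 2 = α - 1 by ring, show -(-α - 1) - 1 = α by ring] at hγα
  rw [show -(-α) - 2 = α - 2 by ring, show -(-α) - 1 = α - 1 by ring] at hγα₁
  refine ⟨hD_int, hN_int, hD_pos, ?_⟩
  rw [hN, hγα, hγα₁, rpow_sub_one hA.ne']
  generalize ∫ x in Ioi 0, (x + c) ^ (-α - 1) * exp (-A / (x + c)) = D at hD_pos ⊢
  field_simp
end
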